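/- Let Γ be a connected Polish group acting continuously on a Polish space X with no fixed points. Then for every x ∈ X and every a ∈ 2^ℕ, there exists g ∈ Γ and a point w in a fixed countable dense subset of X such that the distance d(g·x, w) has a binary code Turing-computing a. Consequently the orbit equivalence relation has the Borel coding property. -/

import Mathlib

/-- Partial functions `ℕ →. ℕ` recursive in an oracle `O : ℕ → ℕ`. -/
inductive RecursiveInOracle (O : ℕ → ℕ) : (ℕ →. ℕ) → Prop
  | oracle : RecursiveInOracle O O
  | zero : RecursiveInOracle O (fun _ => 0)
  | succ : RecursiveInOracle O Nat.succ
  | left : RecursiveInOracle O (fun n => (Nat.unpair n).1)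
  | right : RecursiveInOracle O (fun n => (Nat.unpair n).2)
  | pair {f g : ℕ →. ℕ} : RecursiveInOracle O f → RecursiveInOracle O g →
      RecursiveInOracle O (fun n => Nat.pair <$> f n <*> g n)
  | comp {f g : ℕ →. ℕ} : RecursiveInOracle O f → RecursiveInOracle O g →
      RecursiveInOracle O (fun n => g n >>= f)
  | prec {f g : ℕ →. ℕ} : RecursiveInOracle O f → RecursiveInOracle O g →
      RecursiveInOracle O (Nat.unpaired fun a n =>
        n.rec (f a) fun y IH => do let i ← IH; g (Nat.pair a (Nat.pair y i)))
  | rfind {f : ℕ →. ℕ} : RecursiveInOracle O f →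
      RecursiveInOracle O (fun a => Nat.rfind fun n => (fun m => m = 0) <$> f (Nat.pair a n))

/-- The characteristic function (with values in `ℕ`) of an element of Cantor space. -/
def toNatFun (x : ℕ → Bool) : ℕ → ℕ := fun n => cond (x n) 1 0

/-- Turing reducibility between elements of Cantor space. -/
def TuringLE (x y : ℕ → Bool) : Prop := RecursiveInOracle (toNatFun y) (toNatFun x)

/-- The recursive join of two elements of Cantor space. -/
def join (x y : ℕ → Bool) : ℕ → Bool := fun n => if n % 2 = 0 then x (n / 2) else y (n / 2)

/-- A binary code for a real number `r`: the characteristic function of the set of (codes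
of) rationals below `r`. -/
noncomputable def realCode (r : ℝ) : ℕ → Bool := fun n =>
  @decide (∃ q : ℚ, Encodable.encode q = n ∧ (q : ℝ) < r) (Classical.dec _)


/-!
Fix a point `x` moved by some `g₀`, and a point `w i` closer to `x` than `d(g₀ • x, x) / 2`.
Since `G` is connected, `g ↦ d(g • x, w i)` takes every value between `d(x, w i)` and the strictly
larger `d(g₀ • x, w i)`, so it suffices that every nondegenerate interval `[c₁, c₂] ⊆ [0, ∞)`
contains a real whose code computes `a`. Take `r = (p + ξ) / 2 ^ M` inside it, where `ξ` has
base-4 digits `2 · a n ∈ {0, 2}`. The `N`-th digit is read off the least `m` with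
`4 ^ (N + 1) ξ ≤ m + 1 / 2`, a search that only asks whether dyadic rationals lie below `r`.
Measurability of the coding map holds because each bit of `realCode` is the indicator of an
open set.
-/

namespace RecursiveInOracle

variable {O : ℕ → ℕ}

theorem of_partrec {f : ℕ →. ℕ} (hf : Nat.Partrec f) : RecursiveInOracle O f := by
  induction hf with
  | zero => exact .zero
  | succ => exact .succ
  | left => exact .left
  | right => exact .right
  | pair _ _ ihf ihg => exact .pair ihf ihg
  | comp _ _ ihf ihg => exact .comp ihf ihg
  | prec _ _ ihf ihg => exact .prec ihf ihg
  | rfind _ ih => exact .rfind ih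

theorem of_primrec {f : ℕ → ℕ} (hf : Primrec f) : RecursiveInOracle O f :=
  of_partrec (Partrec.nat_iff.1 hf.to_comp)

theorem trans {O' : ℕ → ℕ} {f : ℕ →. ℕ} (hf : RecursiveInOracle O' f)
    (hO' : RecursiveInOracle O O') : RecursiveInOracle O f := by
  induction hf with
  | oracle => exact hO'
  | zero => exact .zero
  | succ => exact .succ
  | left => exact .left
  | right => exact .right
  | pair _ _ ihf ihg => exact .pair ihf ihg
  | comp _ _ ihf ihg => exact .comp ihf ihg
  | prec _ _ ihf ihg => exact .prec ihf ihg
  | rfind _ ih => exact .rfind ih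

theorem comp_total {f g : ℕ → ℕ} (hf : RecursiveInOracle O f) (hg : RecursiveInOracle O g) :
    RecursiveInOracle O (fun n => f (g n) : ℕ → ℕ) := by
  have h : (fun n => (g : ℕ →. ℕ) n >>= (f : ℕ →. ℕ)) = ((fun n => f (g n) : ℕ → ℕ) : ℕ →. ℕ) :=
    funext fun n => (Part.bind_eq_bind _ _).trans (Part.bind_some _ _)
  exact h ▸ .comp hf hg

theorem oracle_comp {c : ℕ → ℕ} (hc : Primrec c) :
    RecursiveInOracle O (fun n => O (c n) : ℕ → ℕ) :=
  comp_total .oracle (of_primrec hc)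

theorem nat_find {t : ℕ → ℕ} (ht : RecursiveInOracle O t) (h : ∀ k, ∃ j, t (Nat.pair k j) = 0) :
    RecursiveInOracle O (fun k => Nat.find (h k) : ℕ → ℕ) := by
  have e : (fun k => Nat.rfind fun j => (fun m => decide (m = 0)) <$> (t : ℕ →. ℕ) (Nat.pair k j))
      = ((fun k => Nat.find (h k) : ℕ → ℕ) : ℕ →. ℕ) := by
    funext k
    refine Part.eq_some_iff.2 (Nat.mem_rfind.2 ⟨?_, fun hm => ?_⟩)
    · simpa [PFun.lift] using Nat.find_spec (h k)
    · simpa [PFun.lift] using Nat.find_min (h k) hm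
  exact e ▸ .rfind ht

end RecursiveInOracle

theorem TuringLE.trans {a b c : ℕ → Bool} (hab : TuringLE a b) (hbc : TuringLE b c) :
    TuringLE a c :=
  RecursiveInOracle.trans hab hbc

theorem turingLE_column (f : ℕ → ℕ → Bool) (i : ℕ) :
    TuringLE (f i) (fun n => f n.unpair.1 n.unpair.2) := by
  unfold TuringLE
  convert RecursiveInOracle.oracle_comp (O := toNatFun fun n => f n.unpair.1 n.unpair.2)
    (Primrec₂.natPair.comp (Primrec.const i) Primrec.id) using 3
  simp [toNatFun]

theorem toNatFun_eq_zero_iff {b : ℕ → Bool} {n : ℕ} : toNatFun b n = 0 ↔ b n = false := by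
  unfold toNatFun
  cases b n <;> simp

namespace Real

def ofDigitsPrefix {b : ℕ} (d : ℕ → Fin b) : ℕ → ℕ
  | 0 => 0
  | n + 1 => b * ofDigitsPrefix d n + d n

theorem pow_mul_sum_ofDigitsTerm {b : ℕ} (d : ℕ → Fin b) (n : ℕ) :
    (b : ℝ) ^ n * ∑ i ∈ Finset.range n, ofDigitsTerm d i = ofDigitsPrefix d n := by
  have hb : (b : ℝ) ≠ 0 := Nat.cast_ne_zero.2 (Fin.pos (d 0)).ne'
  induction n with
  | zero => simp [ofDigitsPrefix]
  | succ n ih =>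
    rw [Finset.sum_range_succ, mul_add, pow_succ, mul_comm _ (b : ℝ), mul_assoc, ih,
      ofDigitsPrefix, ofDigitsTerm]
    field_simp
    push_cast
    ring

theorem pow_mul_ofDigits {b : ℕ} (d : ℕ → Fin b) (n : ℕ) :
    (b : ℝ) ^ n * ofDigits d = ofDigitsPrefix d n + ofDigits (fun i => d (i + n)) := by
  have hb : (b : ℝ) ^ n ≠ 0 := pow_ne_zero _ (Nat.cast_ne_zero.2 (Fin.pos (d 0)).ne')
  rw [ofDigits_eq_sum_add_ofDigits d n, mul_add, pow_mul_sum_ofDigitsTerm, ← mul_assoc,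
    mul_inv_cancel₀ hb, one_mul]

theorem ofDigitsPrefix_le_pow_mul_ofDigits {b : ℕ} (d : ℕ → Fin b) (n : ℕ) :
    (ofDigitsPrefix d n : ℝ) ≤ (b : ℝ) ^ n * ofDigits d := by
  rw [pow_mul_ofDigits]
  exact le_add_of_nonneg_right (ofDigits_nonneg _)

theorem pow_mul_ofDigits_le_ofDigitsPrefix_add_one {b : ℕ} (d : ℕ → Fin b) (n : ℕ) :
    (b : ℝ) ^ n * ofDigits d ≤ ofDigitsPrefix d n + 1 := by
  rw [pow_mul_ofDigits]
  exact add_le_add_right (ofDigits_le_one _) _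

end Real

theorem realCode_encode (r : ℝ) (q : ℚ) :
    realCode r (Encodable.encode q) = decide ((q : ℝ) < r) := by
  simp only [realCode, Encodable.encode_inj, exists_eq_left]

theorem measurable_realCode : Measurable realCode := by
  refine measurable_pi_iff.2 fun n => measurable_to_bool ?_
  have : (fun r => realCode r n) ⁻¹' {true}
      = ⋃ (q : ℚ) (_ : Encodable.encode q = n), Set.Ioi (q : ℝ) := by
    ext r
    simp [realCode]
  rw [this]
  exact (isOpen_biUnion fun _ _ => isOpen_Ioi).measurableSet

theorem encode_natCast_div_natCast {n d : ℕ} (hd : 0 < d) (h : n.Coprime d) :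
    Encodable.encode ((n : ℚ) / d) = Nat.pair (2 * n) d := by
  have hd' : (0 : ℤ) < d := by exact_mod_cast hd
  have hnum := Rat.num_div_eq_of_coprime (a := n) hd' h
  have hden := Rat.den_div_eq_of_coprime (a := n) hd' h
  push_cast at hnum hden
  calc Encodable.encode ((n : ℚ) / d)
      = Nat.pair (Encodable.encode ((n : ℚ) / d).num) ((n : ℚ) / d).den := rfl
    _ = Nat.pair (2 * n) d := by
      rw [hnum, show ((n : ℚ) / d).den = d by exact_mod_cast hden]
      rfl

-- The index queried is the code of the rational `(2 ^ (K + 1) p + 2m + 1) / 2 ^ (M + K + 1)`,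
-- which is in lowest terms because its numerator is odd.
theorem realCode_dyadic_query (x : ℝ) (p M K m : ℕ) :
    realCode ((p + x) / 2 ^ M) (Nat.pair (2 * (2 ^ (K + 1) * p + 2 * m + 1)) (2 ^ (M + (K + 1))))
      = decide ((2 * m + 1 : ℝ) < 2 ^ (K + 1) * x) := by
  have hodd : (2 ^ (K + 1) * p + 2 * m + 1).Coprime (2 ^ (M + (K + 1))) :=
    Nat.Coprime.pow_right _ (Nat.coprime_two_right.2 ⟨2 ^ K * p + m, by ring⟩)
  rw [← encode_natCast_div_natCast (by positivity) hodd, realCode_encode, decide_eq_decide]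
  push_cast
  rw [pow_add (2 : ℝ) M, div_lt_div_iff₀ (by positivity) (by positivity),
    show (p + x) * (2 ^ M * 2 ^ (K + 1)) = ((p + x) * 2 ^ (K + 1)) * 2 ^ M by ring,
    mul_lt_mul_iff_left₀ (by positivity)]
  constructor <;> intro h <;> linarith

def dyadicQuery (p M n : ℕ) : ℕ :=
  Nat.pair (2 * (2 ^ (2 * n.unpair.1 + 2 + 1) * p + 2 * n.unpair.2 + 1))
    (2 ^ (M + (2 * n.unpair.1 + 2 + 1)))

theorem primrec_dyadicQuery (p M : ℕ) : Primrec (dyadicQuery p M) := by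
  have hpow : Primrec₂ (fun a b : ℕ => a ^ b) := Primrec₂.unpaired'.1 Nat.Primrec.pow
  have hK : Primrec fun n : ℕ => 2 * n.unpair.1 + 2 + 1 :=
    Primrec.succ.comp (Primrec.nat_add.comp
      (Primrec.nat_mul.comp (Primrec.const 2) (Primrec.fst.comp Primrec.unpair)) (Primrec.const 2))
  exact Primrec₂.natPair.comp
    (Primrec.nat_mul.comp (Primrec.const 2) (Primrec.succ.comp (Primrec.nat_add.comp
      (Primrec.nat_mul.comp (hpow.comp (Primrec.const 2) hK) (Primrec.const p))
      (Primrec.nat_mul.comp (Primrec.const 2) (Primrec.snd.comp Primrec.unpair)))))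
    (hpow.comp (Primrec.const 2) (Primrec.nat_add.comp (Primrec.const M) hK))

theorem toNatFun_realCode_dyadicQuery_eq_zero_iff (x : ℝ) (p M N m : ℕ) :
    toNatFun (realCode ((p + x) / 2 ^ M)) (dyadicQuery p M (Nat.pair N m)) = 0 ↔
      2 * (4 ^ (N + 1) * x) ≤ 2 * m + 1 := by
  have h4 : (2 : ℝ) ^ (2 * N + 2 + 1) = 2 * 4 ^ (N + 1) := by
    rw [show 2 * N + 2 + 1 = 2 * (N + 1) + 1 by ring, pow_succ, pow_mul]
    norm_num
    ring
  rw [toNatFun_eq_zero_iff, dyadicQuery, Nat.unpair_pair, realCode_dyadic_query,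
    decide_eq_false_iff_not, not_lt, h4, mul_assoc]

theorem le_nat_find_and_nat_find_le {X : ℝ} {P : ℕ} (hP : (P : ℝ) ≤ X) (hX : X ≤ P + 1)
    {p : ℕ → Prop} [DecidablePred p] (hp : ∀ m, p m ↔ 2 * X ≤ 2 * m + 1) (h : ∃ m, p m) :
    P ≤ Nat.find h ∧ Nat.find h ≤ P + 1 := by
  refine ⟨(Nat.le_find_iff h P).2 fun m hm hpm => ?_, Nat.find_min' h ((hp _).2 ?_)⟩
  · have hm' : (m : ℝ) + 1 ≤ P := by exact_mod_cast hm
    linarith [(hp m).1 hpm]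
  · push_cast
    linarith

-- With digits in `{0, 2}`, both values `m ∈ {P, P + 1}` that the search can return
-- (`P` the integer part of `4 ^ (N + 1) ξ`) satisfy `m / 2 % 2 = a N`.
def cantorDigits (a : ℕ → Bool) (n : ℕ) : Fin 4 := if a n then 2 else 0

noncomputable def cantorReal (a : ℕ → Bool) : ℝ := Real.ofDigits (cantorDigits a)

theorem toNatFun_eq_div_two_mod_two (a : ℕ → Bool) (N : ℕ) {m : ℕ}
    (h₁ : Real.ofDigitsPrefix (cantorDigits a) (N + 1) ≤ m)
    (h₂ : m ≤ Real.ofDigitsPrefix (cantorDigits a) (N + 1) + 1) :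
    toNatFun a N = m / 2 % 2 := by
  cases hN : a N <;>
    simp only [Real.ofDigitsPrefix, cantorDigits, toNatFun, hN, Bool.false_eq_true, ↓reduceIte,
      Fin.isValue, Fin.coe_ofNat_eq_mod, Nat.zero_mod, Nat.reduceMod, add_zero, cond_false,
      cond_true] at h₁ h₂ ⊢ <;>
    omega

theorem turingLE_realCode_dyadic (a : ℕ → Bool) (p M : ℕ) :
    TuringLE a (realCode ((p + cantorReal a) / 2 ^ M)) := by
  set P : ℕ → ℕ := fun N => Real.ofDigitsPrefix (cantorDigits a) (N + 1)
  have hlow (N : ℕ) : (P N : ℝ) ≤ 4 ^ (N + 1) * cantorReal a := by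
    exact_mod_cast Real.ofDigitsPrefix_le_pow_mul_ofDigits (cantorDigits a) (N + 1)
  have hup (N : ℕ) : 4 ^ (N + 1) * cantorReal a ≤ (P N : ℝ) + 1 := by
    exact_mod_cast Real.pow_mul_ofDigits_le_ofDigitsPrefix_add_one (cantorDigits a) (N + 1)
  have hquery := toNatFun_realCode_dyadicQuery_eq_zero_iff (cantorReal a) p M
  have hex (N : ℕ) : ∃ m, toNatFun (realCode ((p + cantorReal a) / 2 ^ M))
      (dyadicQuery p M (Nat.pair N m)) = 0 :=
    ⟨P N + 1, (hquery N _).2 (by push_cast; linarith [hup N])⟩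
  have hdigits : toNatFun a = fun N => Nat.find (hex N) / 2 % 2 := funext fun N => by
    obtain ⟨h₁, h₂⟩ := le_nat_find_and_nat_find_le (hlow N) (hup N) (hquery N) (hex N)
    exact toNatFun_eq_div_two_mod_two a N h₁ h₂
  unfold TuringLE
  rw [hdigits]
  exact RecursiveInOracle.comp_total (RecursiveInOracle.of_primrec
    (Primrec.nat_mod.comp (Primrec.nat_div.comp Primrec.id (Primrec.const 2)) (Primrec.const 2)))
    (RecursiveInOracle.nat_find (RecursiveInOracle.oracle_comp (primrec_dyadicQuery p M)) hex)

theorem exists_dyadic_Icc_subset {c₁ c₂ : ℝ} (h₀ : 0 ≤ c₁) (h : c₁ < c₂) :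
    ∃ p M : ℕ, c₁ ≤ p / 2 ^ M ∧ (p + 1) / 2 ^ M ≤ c₂ := by
  obtain ⟨M, hM⟩ := exists_pow_lt_of_lt_one (div_pos (sub_pos.2 h) two_pos) one_half_lt_one
  have h2M : (0 : ℝ) < 2 ^ M := by positivity
  refine ⟨⌈c₁ * 2 ^ M⌉₊, M, (le_div_iff₀ h2M).2 (Nat.le_ceil _), (div_le_iff₀ h2M).2 ?_⟩
  have hceil := Nat.ceil_lt_add_one (mul_nonneg h₀ h2M.le)
  have : 2 * 2 ^ M * (1 / 2) ^ M = (2 : ℝ) := by rw [mul_assoc, ← mul_pow]; norm_num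
  nlinarith

theorem exists_mem_Icc_turingLE_realCode {c₁ c₂ : ℝ} (h₀ : 0 ≤ c₁) (h : c₁ < c₂)
    (a : ℕ → Bool) : ∃ r ∈ Set.Icc c₁ c₂, TuringLE a (realCode r) := by
  obtain ⟨p, M, hp, hp₁⟩ := exists_dyadic_Icc_subset h₀ h
  have h2M : (0 : ℝ) < 2 ^ M := by positivity
  refine ⟨(p + cantorReal a) / 2 ^ M, ⟨?_, ?_⟩, turingLE_realCode_dyadic a p M⟩
  · exact hp.trans (div_le_div_of_nonneg_right
      (le_add_of_nonneg_right (Real.ofDigits_nonneg _)) h2M.le)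
  · exact (div_le_div_of_nonneg_right
      (add_le_add_right (Real.ofDigits_le_one _) _) h2M.le).trans hp₁

theorem exists_Icc_subset_range_dist_smul {G X : Type*} [Monoid G] [TopologicalSpace G]
    [PreconnectedSpace G] [MetricSpace X] [MulAction G X] [ContinuousSMul G X]
    {w : ℕ → X} (hw : DenseRange w) {x : X} {g₀ : G} (hg₀ : g₀ • x ≠ x) :
    ∃ i, ∃ c₁ c₂ : ℝ, 0 ≤ c₁ ∧ c₁ < c₂ ∧
      Set.Icc c₁ c₂ ⊆ Set.range fun g : G => dist (g • x) (w i) := by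
  obtain ⟨i, hi⟩ := Metric.denseRange_iff.1 hw x _ (half_pos (dist_pos.2 hg₀))
  refine ⟨i, dist x (w i), dist (g₀ • x) (w i), dist_nonneg, ?_, ?_⟩
  · linarith [dist_triangle (g₀ • x) (w i) x, dist_comm x (w i)]
  · simpa using intermediate_value_univ 1 g₀
      ((continuous_id.smul continuous_const).dist continuous_const :
        Continuous fun g : G => dist (g • x) (w i))

theorem stmt12_general {G X : Type*} [TopologicalSpace G] [Group G]
    [ConnectedSpace G]
    [MetricSpace X] [MeasurableSpace X] [BorelSpace X]
    [MulAction G X] [ContinuousSMul G X]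
    (w : ℕ → X) (hw : DenseRange w)
    (hnofix : ∀ x : X, ∃ g : G, g • x ≠ x) :
    (∀ (x : X) (a : ℕ → Bool), ∃ (g : G) (i : ℕ),
        TuringLE a (realCode (dist (g • x) (w i)))) ∧
    ∃ f : X → ℕ → Bool, Measurable f ∧
      ∀ (x : X) (a : ℕ → Bool), ∃ y ∈ MulAction.orbit G x, TuringLE a (f y) := by
  have coding (x : X) (a : ℕ → Bool) :
      ∃ (g : G) (i : ℕ), TuringLE a (realCode (dist (g • x) (w i))) := by
    obtain ⟨g₀, hg₀⟩ := hnofix x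
    obtain ⟨i, c₁, c₂, h₀, hlt, hrange⟩ := exists_Icc_subset_range_dist_smul hw hg₀
    obtain ⟨r, hr, har⟩ := exists_mem_Icc_turingLE_realCode h₀ hlt a
    obtain ⟨g, rfl⟩ := hrange hr
    exact ⟨g, i, har⟩
  refine ⟨coding, fun y n => realCode (dist y (w n.unpair.1)) n.unpair.2, ?_, fun x a => ?_⟩
  · exact measurable_pi_lambda _ fun n => (measurable_pi_apply _).comp
      (measurable_realCode.comp (continuous_id.dist continuous_const).measurable)
  · obtain ⟨g, i, ha⟩ := coding x a
    exact ⟨g • x, MulAction.mem_orbit x g,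
      ha.trans (turingLE_column (fun j => realCode (dist (g • x) (w j))) i)⟩

/-- Let `Γ` be a connected Polish group acting continuously and without fixed points on a
Polish (metric) space `X` with countable dense subset `{w i}`.  Then for every `x ∈ X` and
`a ∈ 2^ℕ` there are `g ∈ Γ` and `i` such that the code of the distance `d(g•x, w i)`
Turing-computes `a`; consequently the orbit equivalence relation has the Borel coding
property. -/
theorem stmt12 {G X : Type*} [TopologicalSpace G] [Group G] [IsTopologicalGroup G]
    [PolishSpace G] [ConnectedSpace G]
    [MetricSpace X] [PolishSpace X] [MeasurableSpace X] [BorelSpace X]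
    [MulAction G X] [ContinuousSMul G X]
    (w : ℕ → X) (hw : DenseRange w)
    (hnofix : ∀ x : X, ∃ g : G, g • x ≠ x) :
    (∀ (x : X) (a : ℕ → Bool), ∃ (g : G) (i : ℕ),
        TuringLE a (realCode (dist (g • x) (w i)))) ∧
    ∃ f : X → ℕ → Bool, Measurable f ∧
      ∀ (x : X) (a : ℕ → Bool), ∃ y ∈ MulAction.orbit G x, TuringLE a (f y) :=
  stmt12_general w hw hnofix
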